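/- arXiv:1706.08325 — 5 statements merged into one kernel-verified Lean document; each statement's English description precedes it below -/
import Mathlib

section
/- Let T ⊆ Σ contain exactly one element from each Γ-orbit of Σ. Then for every object Y ∈ Ω there exist a seed S ∈ T and an object X ∈ Ω such that (X,S) ∈ e, (X,S) ≅ (X,M(X)) in Ω×Σ, and X ≅ Y. (That is, the canonicity test (T1) does not eliminate any isomorphism class of objects.) -/
/-- McKay's canonical extension framework (Lemma `mckay-t1`, completeness part):
the canonicity test (T1) does not eliminate any isomorphism class of objects. -/
theorem stmt_2 {Γ Ω Sg : Type*} [Group Γ] [Finite Γ] [Finite Ω] [Finite Sg]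
    [MulAction Γ Ω] [MulAction Γ Sg]
    (e : Ω → Sg → Prop)
    (hE1 : ∀ (γ : Γ) (X : Ω) (S : Sg), e X S → e (γ • X) (γ • S))
    (hE2 : ∀ X : Ω, ∃ S : Sg, e X S)
    (M : Ω → Sg)
    (hM1 : ∀ X : Ω, e X (M X))
    (hM2 : ∀ X Y : Ω, X ∈ MulAction.orbit Γ Y →
      (X, M X) ∈ MulAction.orbit Γ (Y, M Y))
    (T : Set Sg)
    (hT : ∀ S : Sg, ∃! S' : Sg, S' ∈ T ∧ S' ∈ MulAction.orbit Γ S) :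
    ∀ Y : Ω, ∃ S ∈ T, ∃ X : Ω,
      e X S ∧ (X, S) ∈ MulAction.orbit Γ (X, M X) ∧ X ∈ MulAction.orbit Γ Y := by
  intro Y
  obtain ⟨S', ⟨hS'T, γ, hγ⟩, -⟩ := hT (M Y)
  dsimp only at hγ
  refine ⟨S', hS'T, γ • Y, ?_, ?_, γ, rfl⟩
  · have := hE1 γ Y (M Y) (hM1 Y)
    rwa [hγ] at this
  · have h1 : (γ • Y, M (γ • Y)) ∈ MulAction.orbit Γ (Y, M Y) :=
      hM2 (γ • Y) Y ⟨γ, rfl⟩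
    obtain ⟨δ, hδ⟩ := h1
    dsimp only at hδ
    refine ⟨γ * δ⁻¹, ?_⟩
    show (γ * δ⁻¹) • (γ • Y, M (γ • Y)) = (γ • Y, S')
    have : (δ⁻¹ : Γ) • (γ • Y, M (γ • Y)) = ((Y : Ω), M Y) := by
      rw [← hδ, smul_smul, inv_mul_cancel, one_smul]
    rw [mul_smul, this, Prod.smul_mk, hγ]
end

section
/- Let S ∈ Σ, let X ∈ Ω with (X,S) ∈ e, and let α ∈ Aut(S). Then (X,S) ≅ (X,M(X)) in Ω×Σ if and only if (X^α,S) ≅ (X^α,M(X^α)) in Ω×Σ. (The outcome of the canonicity test is invariant on each Aut(S)-orbit of extensions of S.) -/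
/-- McKay's canonical extension framework (Lemma `mckay-t2`): the outcome of the
canonicity test (T1) is invariant on each `Aut(S)`-orbit of extensions of `S`. -/
theorem stmt_3 {Γ Ω Sg : Type*} [Group Γ] [Finite Γ] [Finite Ω] [Finite Sg]
    [MulAction Γ Ω] [MulAction Γ Sg]
    (e : Ω → Sg → Prop)
    (hE1 : ∀ (γ : Γ) (X : Ω) (S : Sg), e X S → e (γ • X) (γ • S))
    (hE2 : ∀ X : Ω, ∃ S : Sg, e X S)
    (M : Ω → Sg)
    (hM1 : ∀ X : Ω, e X (M X))
    (hM2 : ∀ X Y : Ω, X ∈ MulAction.orbit Γ Y →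
      (X, M X) ∈ MulAction.orbit Γ (Y, M Y))
    (S : Sg) (X : Ω) (hXS : e X S)
    (α : Γ) (hα : α ∈ MulAction.stabilizer Γ S) :
    (X, S) ∈ MulAction.orbit Γ (X, M X) ↔
      (α • X, S) ∈ MulAction.orbit Γ (α • X, M (α • X)) := by
  have horb : MulAction.orbit Γ (α • X, M (α • X)) = MulAction.orbit Γ (X, M X) :=
    MulAction.orbit_eq_iff.mpr (hM2 (α • X) X ⟨α, rfl⟩)
  have hS : α • S = S := hα
  have hpt : (α • X, S) = α • (X, S) := by
    simp [Prod.smul_def, hS]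
  rw [horb, hpt]
  constructor
  · rintro ⟨γ, hγ⟩
    exact ⟨α * γ, by simp only [mul_smul, hγ]⟩
  · rintro ⟨γ, hγ⟩
    exact ⟨α⁻¹ * γ, by simp only [mul_smul, hγ, inv_smul_smul]⟩
end

section
/- Let T ⊆ Σ contain exactly one element from each Γ-orbit of Σ, and for each S ∈ T let ρ_S : e(S) → e(S) be a function selecting a representative from each Aut(S)-orbit of e(S) (i.e., ρ_S(X) lies in the Aut(S)-orbit of X, and ρ_S(X) = ρ_S(Y) whenever X and Y lie in the same Aut(S)-orbit). Define the set A of accepted objects by: X ∈ A iff there exists S ∈ T with (X,S) ∈ e, (X,S) ≅ (X,M(X)) in Ω×Σ, and ρ_S(X) = X. Then A contains exactly one element from each Γ-orbit of Ω. -/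
/-- McKay's canonical extension framework (Lemma `mckay-full`): the procedure
equipped with the canonicity test (T1) and a representative-selection test (T2)
accepts exactly one object from each isomorphism class. -/
theorem stmt_4 {Γ Ω Sg : Type*} [Group Γ] [Finite Γ] [Finite Ω] [Finite Sg]
    [MulAction Γ Ω] [MulAction Γ Sg]
    (e : Ω → Sg → Prop)
    (hE1 : ∀ (γ : Γ) (X : Ω) (S : Sg), e X S → e (γ • X) (γ • S))
    (hE2 : ∀ X : Ω, ∃ S : Sg, e X S)
    (M : Ω → Sg)
    (hM1 : ∀ X : Ω, e X (M X))
    (hM2 : ∀ X Y : Ω, X ∈ MulAction.orbit Γ Y →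
      (X, M X) ∈ MulAction.orbit Γ (Y, M Y))
    (T : Set Sg)
    (hT : ∀ S : Sg, ∃! S' : Sg, S' ∈ T ∧ S' ∈ MulAction.orbit Γ S)
    (ρ : Sg → Ω → Ω)
    (hρ1 : ∀ S ∈ T, ∀ X : Ω, e X S →
      ∃ α ∈ MulAction.stabilizer Γ S, α • X = ρ S X)
    (hρ2 : ∀ S ∈ T, ∀ X Y : Ω, e X S → e Y S →
      (∃ α ∈ MulAction.stabilizer Γ S, α • X = Y) → ρ S X = ρ S Y) :
    ∀ Y : Ω, ∃! X : Ω,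
      (∃ S ∈ T, e X S ∧ (X, S) ∈ MulAction.orbit Γ (X, M X) ∧ ρ S X = X) ∧
        X ∈ MulAction.orbit Γ Y := by
  intro Y
  obtain ⟨S', ⟨hS'T, ⟨γ, hγ0⟩⟩, hSuniq⟩ := hT (M Y)
  have hγ : γ • M Y = S' := hγ0
  set Y' := γ • Y with hY'
  have heY' : e Y' S' := by
    have := hE1 γ Y (M Y) (hM1 Y)
    rwa [hγ] at this
  obtain ⟨α, hαstab, hαX⟩ := hρ1 S' hS'T Y' heY'
  set X := ρ S' Y' with hX
  have hαS : α • S' = S' := hαstab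
  have heX : e X S' := by
    have := hE1 α Y' S' heY'
    rwa [hαS, hαX] at this
  have hXorbY : X ∈ MulAction.orbit Γ Y := by
    refine ⟨α * γ, ?_⟩
    show (α * γ) • Y = X
    rw [mul_smul, ← hY', hαX]
  have hρX : ρ S' X = X := (hρ2 S' hS'T Y' X heY' heX ⟨α, hαstab, hαX⟩).symm
  have hpair : (X, S') ∈ MulAction.orbit Γ (X, M X) := by
    have h1 : ((X : Ω), M X) ∈ MulAction.orbit Γ (Y, M Y) := hM2 X Y hXorbY
    have h2 : ((X : Ω), S') ∈ MulAction.orbit Γ (Y, M Y) := by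
      refine ⟨α * γ, ?_⟩
      show (α * γ) • ((Y, M Y) : Ω × Sg) = (X, S')
      rw [Prod.smul_mk, mul_smul, mul_smul, ← hY', hαX, hγ, hαS]
    rw [MulAction.orbit_eq_iff.mpr h1]
    exact h2
  refine ⟨X, ⟨⟨S', hS'T, heX, hpair, hρX⟩, hXorbY⟩, ?_⟩
  rintro Z ⟨⟨S₂, hS₂T, heZ, hpairZ, hρZ⟩, hZorbY⟩
  -- Z ∈ orbit X
  have hZX : Z ∈ MulAction.orbit Γ X := by
    rw [MulAction.orbit_eq_iff.mpr hXorbY]; exact hZorbY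
  have hZMZ : ((Z : Ω), M Z) ∈ MulAction.orbit Γ (X, M X) := hM2 Z X hZX
  have hZS₂ : ((Z : Ω), S₂) ∈ MulAction.orbit Γ (X, S') := by
    rw [MulAction.orbit_eq_iff.mpr hpair]
    rw [MulAction.orbit_eq_iff.mpr hZMZ] at hpairZ
    exact hpairZ
  obtain ⟨β, hβ⟩ := hZS₂
  have hβX : β • X = Z := congrArg Prod.fst hβ
  have hβS : β • S' = S₂ := congrArg Prod.snd hβ
  have hS₂S' : S₂ = S' := by
    have h1 : S₂ ∈ T ∧ S₂ ∈ MulAction.orbit Γ S' := ⟨hS₂T, ⟨β, hβS⟩⟩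
    have h2 : S' ∈ T ∧ S' ∈ MulAction.orbit Γ S' := ⟨hS'T, MulAction.mem_orbit_self S'⟩
    obtain ⟨W, _, hW⟩ := hT S'
    exact (hW S₂ h1).trans (hW S' h2).symm
  have hβstab : β ∈ MulAction.stabilizer Γ S' := by
    rw [MulAction.mem_stabilizer_iff, hβS, hS₂S']
  have : ρ S' X = ρ S' Z := hρ2 S' hS'T X Z heX (hS₂S' ▸ heZ) ⟨β, hβstab, hβX⟩
  rw [hρX] at this
  rw [this, ← hS₂S', hρZ]
end

section
/- Let X ∈ Ω_j with underline(X) = U_{j−1} ∪ {p} for some p in the Aut(U_{j−1})-orbit of u_j, let κ(X) ∈ Γ with Z = X^{κ(X)}, and let ν(p) ∈ Aut(U_{j−1}) with p^{ν(p)} = u_j. Then: (i) Aut(Z)^{κ(X)^{-1}ν(p)} ≤ Aut(U_j) and underline(Z)^{κ(X)^{-1}ν(p)} = U_j; (ii) the set Q = {q ∈ U : q^{κ(X)^{-1}ν(p)} lies in the Aut(U_j)-orbit of u_j} satisfies Q ⊆ underline(Z); and (iii) Q is independent of the choices involved: if κ₁, κ₂ ∈ Γ satisfy X^{κ₁} =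 X^{κ₂} = Z and ν₁, ν₂ ∈ Aut(U_{j−1}) satisfy p^{ν₁} = p^{ν₂} = u_j, then {q ∈ U : q^{κ₁^{-1}ν₁} ∈ u_j^{Aut(U_j)}} = {q ∈ U : q^{κ₂^{-1}ν₂} ∈ u_j^{Aut(U_j)}}. -/
/-!
We model the setting of the paper: `U` and `R` are finite sets, `Γ` is a
subgroup of `Sym(U)` (here `Equiv.Perm U`).  A partial assignment `X : W → R`
with `W ⊆ U` is modeled as a function `U → Option R` whose domain
(`underline X`) is the set of points where it is `some`.  The paper's right
action is rendered as the corresponding (mirror) left action: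
`(γ • X)(u) = X(γ⁻¹ u)`, points are acted on by `u ↦ γ u` and sets by images.
-/

namespace PrefixAssignment

variable {U R : Type*}

/-- The domain `underline X` of a partial assignment. -/
def dom (X : U → Option R) : Set U := {u | X u ≠ none}

/-- The action of a permutation `γ` on a partial assignment:
`(psmul γ X)(u) = X(γ⁻¹ u)` (left-action form of the paper's
`X^γ(u) = X(u^{γ⁻¹})`). -/
def psmul (γ : Equiv.Perm U) (X : U → Option R) : U → Option R :=
  fun u => X (γ⁻¹ u)

open scoped Classical in
/-- Restriction of a partial assignment to a set `W` of variables. -/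
noncomputable def restrict (X : U → Option R) (W : Set U) : U → Option R :=
  fun u => if u ∈ W then X u else none

/-- `Uset u j = U_j = {u_1, …, u_j}` (`u` is 0-indexed). -/
def Uset {k : ℕ} (u : Fin k → U) (j : ℕ) : Set U :=
  {x | ∃ i : Fin k, (i : ℕ) < j ∧ u i = x}

/-- `Ω_j`: partial assignments whose domain lies in the `Γ`-orbit of `U_j`. -/
def OmegaJ (Γ : Subgroup (Equiv.Perm U)) {k : ℕ} (u : Fin k → U) (j : ℕ)
    (X : U → Option R) : Prop :=
  ∃ γ ∈ Γ, ⇑γ '' dom X = Uset u j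

/-- The extension relation `e ⊆ Ω_j × Ω_{j-1}`:  `erel Γ u j X S` holds iff
there is `γ ∈ Γ` taking the domain of `X` to `U_j`, the domain of `S` to
`U_{j-1}`, and the restriction of `γ • X` to `U_{j-1}` to `γ • S`. -/
def erel (Γ : Subgroup (Equiv.Perm U)) {k : ℕ} (u : Fin k → U) (j : ℕ)
    (X S : U → Option R) : Prop :=
  ∃ γ ∈ Γ, ⇑γ '' dom X = Uset u j ∧ ⇑γ '' dom S = Uset u (j - 1) ∧
    restrict (psmul γ X) (Uset u (j - 1)) = psmul γ S

/-- The setwise stabilizer `Aut(W)` of `W ⊆ U` in `Γ`. -/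
def AutSet (Γ : Subgroup (Equiv.Perm U)) (W : Set U) : Set (Equiv.Perm U) :=
  {γ | γ ∈ Γ ∧ ⇑γ '' W = W}

/-- The automorphism group (stabilizer) `Aut(S)` of a partial assignment `S` in `Γ`. -/
def AutAsg (Γ : Subgroup (Equiv.Perm U)) (S : U → Option R) : Set (Equiv.Perm U) :=
  {γ | γ ∈ Γ ∧ psmul γ S = S}

/-- The orbit of a point `p ∈ U` under a set `A` of permutations. -/
def ptOrbit (A : Set (Equiv.Perm U)) (p : U) : Set U :=
  {q | ∃ γ ∈ A, γ p = q}

/-!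
Write `g = ν κ⁻¹`. Since `Z = κ • X` and `ν` fixes `U_{j-1}` setwise while sending `p` to `u_j`,
`g` maps `underline Z = κ(U_{j-1} ∪ {p})` onto `U_j`. Conjugation by `g` therefore carries the
stabilizer of `Z`, which stabilizes `underline Z`, into `Aut(U_j)`; the orbit `u_j^{Aut(U_j)}`
lies in `U_j`, so its `g`-preimage lies in `underline Z`; and two admissible choices `g₁, g₂`
differ by `g₂ g₁⁻¹ ∈ Aut(U_j)`, which preserves that orbit.
-/

lemma dom_psmul (γ : Equiv.Perm U) (X : U → Option R) :
    dom (psmul γ X) = ⇑γ '' dom X := by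
  ext x
  constructor
  · intro h; exact ⟨γ⁻¹ x, h, by simp⟩
  · rintro ⟨y, hy, rfl⟩; simpa [dom, psmul] using hy

lemma image_dom_psmul (ν κ : Equiv.Perm U) (X : U → Option R) :
    ⇑(ν * κ⁻¹) '' dom (psmul κ X) = ⇑ν '' dom X := by
  simp [dom_psmul, Set.image_image]

lemma Uset_eq_union {k : ℕ} (u : Fin k → U) {j : ℕ} (hj : 1 ≤ j) (hjk : j - 1 < k) :
    Uset u j = Uset u (j - 1) ∪ {u ⟨j - 1, hjk⟩} := by
  ext x
  simp only [Uset, Set.mem_union, Set.mem_singleton_iff, Set.mem_ofPred_eq]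
  constructor
  · rintro ⟨i, hi, rfl⟩
    rcases lt_or_ge (i : ℕ) (j - 1) with h | h
    · exact Or.inl ⟨i, h, rfl⟩
    · exact Or.inr (congrArg u (Fin.ext (show (i : ℕ) = j - 1 by omega)))
  · rintro (⟨i, hi, rfl⟩ | rfl)
    · exact ⟨i, by omega, rfl⟩
    · exact ⟨⟨j - 1, hjk⟩, by simp only; omega, rfl⟩

lemma image_inv_image (g : Equiv.Perm U) (S : Set U) : ⇑g⁻¹ '' (⇑g '' S) = S := by
  simp [Set.image_image]

section AutSet

variable {Γ : Subgroup (Equiv.Perm U)} {S W : Set U}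

lemma AutSet.mul_mem {a b : Equiv.Perm U} (ha : a ∈ AutSet Γ W) (hb : b ∈ AutSet Γ W) :
    a * b ∈ AutSet Γ W :=
  ⟨Γ.mul_mem ha.1 hb.1, by rw [Equiv.Perm.coe_mul, Set.image_comp, hb.2, ha.2]⟩

lemma AutSet.inv_mem {a : Equiv.Perm U} (ha : a ∈ AutSet Γ W) : a⁻¹ ∈ AutSet Γ W :=
  ⟨Γ.inv_mem ha.1, by conv_lhs => rw [← ha.2, image_inv_image]⟩

lemma AutAsg_subset_AutSet_dom (Z : U → Option R) : AutAsg Γ Z ⊆ AutSet Γ (dom Z) :=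
  fun δ hδ => ⟨hδ.1, by rw [← dom_psmul, hδ.2]⟩

lemma conj_mem_AutSet_image {g δ : Equiv.Perm U} (hg : g ∈ Γ) (hδ : δ ∈ AutSet Γ S) :
    g * δ * g⁻¹ ∈ AutSet Γ (⇑g '' S) := by
  refine ⟨Γ.mul_mem (Γ.mul_mem hg hδ.1) (Γ.inv_mem hg), ?_⟩
  simp only [Equiv.Perm.coe_mul, Set.image_comp]
  rw [image_inv_image, hδ.2]

lemma ptOrbit_AutSet_subset {v : U} (hv : v ∈ W) : ptOrbit (AutSet Γ W) v ⊆ W := by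
  rintro _ ⟨γ, hγ, rfl⟩
  rw [← hγ.2]
  exact Set.mem_image_of_mem γ hv

lemma apply_mem_ptOrbit_AutSet_iff {τ : Equiv.Perm U} (hτ : τ ∈ AutSet Γ W) {v x : U} :
    τ x ∈ ptOrbit (AutSet Γ W) v ↔ x ∈ ptOrbit (AutSet Γ W) v := by
  constructor
  · rintro ⟨γ, hγ, hγv⟩
    exact ⟨τ⁻¹ * γ, AutSet.mul_mem (AutSet.inv_mem hτ) hγ, by simp [hγv]⟩
  · rintro ⟨γ, hγ, rfl⟩
    exact ⟨τ * γ, AutSet.mul_mem hτ hγ, rfl⟩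

lemma preimage_ptOrbit_AutSet_subset {g : Equiv.Perm U} (hg : ⇑g '' S = W) {v : U}
    (hv : v ∈ W) : ⇑g ⁻¹' ptOrbit (AutSet Γ W) v ⊆ S := by
  rw [← (g.injective.preimage_image S), hg]
  exact Set.preimage_mono (ptOrbit_AutSet_subset hv)

lemma preimage_ptOrbit_AutSet_eq {g₁ g₂ : Equiv.Perm U} (hg₁ : g₁ ∈ Γ) (hg₂ : g₂ ∈ Γ)
    (h₁ : ⇑g₁ '' S = W) (h₂ : ⇑g₂ '' S = W) (v : U) :
    ⇑g₁ ⁻¹' ptOrbit (AutSet Γ W) v = ⇑g₂ ⁻¹' ptOrbit (AutSet Γ W) v := by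
  have hτ : g₂ * g₁⁻¹ ∈ AutSet Γ W :=
    ⟨Γ.mul_mem hg₂ (Γ.inv_mem hg₁), by
      rw [Equiv.Perm.coe_mul, Set.image_comp]
      conv_lhs => rw [← h₁, image_inv_image, h₂]⟩
  ext q
  have hq : g₂ q = (g₂ * g₁⁻¹) (g₁ q) := by simp
  rw [Set.mem_preimage, Set.mem_preimage, hq, apply_mem_ptOrbit_AutSet_iff hτ]

end AutSet

/-- Properties of the minimum-variable selection in test (T1'): with
`Z = κ • X` and `ν = ν(p) ∈ Aut(U_{j-1})`, `ν p = u_j`, one has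
(i) `(ν κ⁻¹) Aut(Z) (ν κ⁻¹)⁻¹ ≤ Aut(U_j)` and `(ν κ⁻¹) • underline Z = U_j`;
(ii) the candidate set `Q = {q : (ν κ⁻¹) q ∈ u_j^{Aut(U_j)}}` satisfies
`Q ⊆ underline Z`; and (iii) `Q` does not depend on the choice of `κ` and `ν`. -/
theorem stmt_10 {U R : Type*}
    (Γ : Subgroup (Equiv.Perm U)) {k : ℕ} (u : Fin k → U)
    (j : ℕ) (hj1 : 1 ≤ j) (hjk : j ≤ k)
    (X : U → Option R) (p : U)
    (hdom : dom X = Uset u (j - 1) ∪ {p})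
    (κ : Equiv.Perm U) (hκ : κ ∈ Γ)
    (Z : U → Option R) (hZ : Z = psmul κ X)
    (ν : Equiv.Perm U) (hν : ν ∈ AutSet Γ (Uset u (j - 1))) (hνp : ν p = u ⟨j - 1, by omega⟩) :
    (∀ δ ∈ AutAsg Γ Z, (ν * κ⁻¹) * δ * (ν * κ⁻¹)⁻¹ ∈ AutSet Γ (Uset u j)) ∧
      ⇑(ν * κ⁻¹) '' dom Z = Uset u j ∧
      {q : U | (ν * κ⁻¹) q ∈ ptOrbit (AutSet Γ (Uset u j)) (u ⟨j - 1, by omega⟩)} ⊆ dom Z ∧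
      (∀ κ₁ κ₂ ν₁ ν₂ : Equiv.Perm U, κ₁ ∈ Γ → κ₂ ∈ Γ →
        psmul κ₁ X = Z → psmul κ₂ X = Z →
        ν₁ ∈ AutSet Γ (Uset u (j - 1)) → ν₂ ∈ AutSet Γ (Uset u (j - 1)) →
        ν₁ p = u ⟨j - 1, by omega⟩ → ν₂ p = u ⟨j - 1, by omega⟩ →
        {q : U | (ν₁ * κ₁⁻¹) q ∈ ptOrbit (AutSet Γ (Uset u j)) (u ⟨j - 1, by omega⟩)} =
          {q : U | (ν₂ * κ₂⁻¹) q ∈ ptOrbit (AutSet Γ (Uset u j)) (u ⟨j - 1, by omega⟩)}) := by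
  have himage : ∀ κ' ν' : Equiv.Perm U, psmul κ' X = Z → ν' ∈ AutSet Γ (Uset u (j - 1)) →
      ν' p = u ⟨j - 1, by omega⟩ → ⇑(ν' * κ'⁻¹) '' dom Z = Uset u j := by
    rintro κ' ν' rfl hν' hν'p
    rw [image_dom_psmul, hdom, Set.image_union, Set.image_singleton, hν'.2, hν'p,
      Uset_eq_union u hj1 (by omega)]
  have hg : ν * κ⁻¹ ∈ Γ := Γ.mul_mem hν.1 (Γ.inv_mem hκ)
  have hgZ := himage κ ν hZ.symm hν hνp
  have hu_mem : u ⟨j - 1, by omega⟩ ∈ Uset u j := by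
    rw [Uset_eq_union u hj1 (by omega)]; exact Or.inr rfl
  refine ⟨fun δ hδ => ?_, hgZ, preimage_ptOrbit_AutSet_subset hgZ hu_mem, ?_⟩
  · simpa only [hgZ] using conj_mem_AutSet_image hg (AutAsg_subset_AutSet_dom Z hδ)
  · intro κ₁ κ₂ ν₁ ν₂ hκ₁ hκ₂ hZ₁ hZ₂ hν₁ hν₂ hν₁p hν₂p
    exact preimage_ptOrbit_AutSet_eq (Γ.mul_mem hν₁.1 (Γ.inv_mem hκ₁))
      (Γ.mul_mem hν₂.1 (Γ.inv_mem hκ₂)) (himage κ₁ ν₁ hZ₁ hν₁ hν₁p) (himage κ₂ ν₂ hZ₂ hν₂ hν₂p) _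

end PrefixAssignment
end

section
/- Under the value-permuting action of Γ ≤ Sym(R)≀Sym(U), let S ∈ Ω_{j−1} be normalized and let X, Y ∈ e(S) with underline(X) = U_{j−1} ∪ {p} and underline(Y) = U_{j−1} ∪ {q}. Then X and Y lie in the same Aut(S)-orbit of partial assignments if and only if the pairs (p, X(p)) and (q, Y(q)) lie in the same Aut(S)-orbit of U × R under the action (u,r)^{(π,σ)} = (u^π, r^{σ(u^π)}). -/
/-!
The wreath product `Sym(R) ≀ Sym(U)` is modeled as the type `Wr U R` of pairs
`(perm, vals)` with `perm ∈ Sym(U)` and `vals : U → Sym(R)`, equipped with the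
group structure mirroring (as a left action) the paper's right-action
conventions: `(π₁,σ₁)(π₂,σ₂) = (π₁π₂, v ↦ σ₁(v) σ₂(π₁⁻¹ v))`, acting on points
by `u ↦ π u`, on pairs by `(u,r) ↦ (π u, σ(π u) r)`, and on partial
assignments (modeled as `U → Option R`) by `(g • X)(v) = σ(v)(X(π⁻¹ v))`.
-/

namespace ValueSymmetry

/-- An element of the wreath product `Sym(R) ≀ Sym(U)`. -/
@[ext]
structure Wr (U R : Type*) where
  perm : Equiv.Perm U
  vals : U → Equiv.Perm R

namespace Wr

variable {U R : Type*}

instance : Mul (Wr U R) :=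
  ⟨fun g h => ⟨g.perm * h.perm, fun v => g.vals v * h.vals (g.perm⁻¹ v)⟩⟩

instance : One (Wr U R) := ⟨⟨1, fun _ => 1⟩⟩

instance : Inv (Wr U R) := ⟨fun g => ⟨g.perm⁻¹, fun v => (g.vals (g.perm v))⁻¹⟩⟩

@[simp] lemma mul_perm (g h : Wr U R) : (g * h).perm = g.perm * h.perm := rfl
@[simp] lemma mul_vals (g h : Wr U R) (v : U) :
    (g * h).vals v = g.vals v * h.vals (g.perm⁻¹ v) := rfl
@[simp] lemma one_perm : (1 : Wr U R).perm = 1 := rfl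
@[simp] lemma one_vals (v : U) : (1 : Wr U R).vals v = 1 := rfl
@[simp] lemma inv_perm (g : Wr U R) : (g⁻¹).perm = g.perm⁻¹ := rfl
@[simp] lemma inv_vals (g : Wr U R) (v : U) :
    (g⁻¹).vals v = (g.vals (g.perm v))⁻¹ := rfl

instance : Group (Wr U R) where
  mul_assoc a b c := by
    ext
    · simp [mul_assoc]
    · simp [mul_assoc]
  one_mul a := by
    ext <;> simp
  mul_one a := by
    ext <;> simp
  inv_mul_cancel a := by
    ext <;> simp

end Wr

variable {U R : Type*}

/-- The action of a wreath-product element on a point of `U`. -/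
def wpt (g : Wr U R) (p : U) : U := g.perm p

/-- The action of a wreath-product element on a pair `(u, r) ∈ U × R`
(left-action form of the paper's `(u,r)^{(π,σ)} = (u^π, r^{σ(u^π)})`). -/
def wpair (g : Wr U R) (pr : U × R) : U × R :=
  (g.perm pr.1, g.vals (g.perm pr.1) pr.2)

/-- The domain `underline X` of a partial assignment. -/
def dom (X : U → Option R) : Set U := {u | X u ≠ none}

/-- The value-permuting action of a wreath-product element on a partial
assignment (left-action form of the paper's `X^{(π,σ)}(u) = X(u^{π⁻¹})^{σ(u)}`). -/
def wsmul (g : Wr U R) (X : U → Option R) : U → Option R :=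
  fun v => (X (g.perm⁻¹ v)).map (g.vals v)

open scoped Classical in
/-- Restriction of a partial assignment to a set `W` of variables. -/
noncomputable def restrict (X : U → Option R) (W : Set U) : U → Option R :=
  fun u => if u ∈ W then X u else none

/-- `Uset u j = U_j = {u_1, …, u_j}` (`u` is 0-indexed). -/
def Uset {k : ℕ} (u : Fin k → U) (j : ℕ) : Set U :=
  {x | ∃ i : Fin k, (i : ℕ) < j ∧ u i = x}

/-- `Ω_j`: partial assignments whose domain lies in the `Γ`-orbit of `U_j`. -/
def OmegaJ (Γ : Subgroup (Wr U R)) {k : ℕ} (u : Fin k → U) (j : ℕ)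
    (X : U → Option R) : Prop :=
  ∃ g ∈ Γ, ⇑g.perm '' dom X = Uset u j

/-- The extension relation `e ⊆ Ω_j × Ω_{j-1}` for the value-permuting action. -/
def erel (Γ : Subgroup (Wr U R)) {k : ℕ} (u : Fin k → U) (j : ℕ)
    (X S : U → Option R) : Prop :=
  ∃ g ∈ Γ, ⇑g.perm '' dom X = Uset u j ∧ ⇑g.perm '' dom S = Uset u (j - 1) ∧
    restrict (wsmul g X) (Uset u (j - 1)) = wsmul g S

/-- The setwise stabilizer `Aut(W)` of `W ⊆ U` in `Γ`. -/
def AutSet (Γ : Subgroup (Wr U R)) (W : Set U) : Set (Wr U R) :=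
  {g | g ∈ Γ ∧ ⇑g.perm '' W = W}

/-- The automorphism group (stabilizer) `Aut(S)` of a partial assignment `S` in `Γ`. -/
def AutAsg (Γ : Subgroup (Wr U R)) (S : U → Option R) : Set (Wr U R) :=
  {g | g ∈ Γ ∧ wsmul g S = S}

/-- The orbit of a point `p ∈ U` under a set `A` of wreath-product elements. -/
def ptOrbit (A : Set (Wr U R)) (p : U) : Set U :=
  {q | ∃ g ∈ A, g.perm p = q}

/-!
Since `X ∈ e(S)` agrees with `S` on `underline S = U_{j-1}`, it is the one-point update
`S[p ↦ r]`; and `p ∉ U_{j-1}`, as otherwise a witness of `X e S` would map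
`underline X = underline S` onto both `U_j` and `U_{j-1}`. An element `g ∈ Aut(S)` sends
`S[p ↦ r]` to `S[g p ↦ σ(g p) r]`, and two one-point updates of `S` at points outside its
domain coincide exactly when their points and values do.
-/

lemma notMem_dom_iff {X : U → Option R} {v : U} : v ∉ dom X ↔ X v = none := by
  simp [dom]

lemma wsmul_apply_perm (g : Wr U R) (X : U → Option R) (v : U) :
    wsmul g X (g.perm v) = (X v).map (g.vals (g.perm v)) := by
  simp [wsmul]

lemma wsmul_update [DecidableEq U] (g : Wr U R) (S : U → Option R) (p : U) (r : R) :
    wsmul g (Function.update S p (some r)) =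
      Function.update (wsmul g S) (g.perm p) (some (g.vals (g.perm p) r)) := by
  funext v
  obtain ⟨w, rfl⟩ := g.perm.surjective v
  rcases eq_or_ne w p with rfl | hwp
  · simp [wsmul_apply_perm]
  · simp [wsmul_apply_perm, hwp]

lemma update_some_eq_update_some_iff [DecidableEq U] {S : U → Option R} {p q : U} {r s : R}
    (hp : S p = none) :
    Function.update S p (some r) = Function.update S q (some s) ↔ p = q ∧ r = s := by
  constructor
  · intro h
    obtain rfl : p = q := by
      by_contra hpq
      simpa [Function.update_of_ne hpq, hp] using congrFun h p
    simpa using congrFun h p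
  · rintro ⟨rfl, rfl⟩
    rfl

lemma eq_update_of_eqOn [DecidableEq U] {X S : U → Option R} {p : U} {r : R}
    (hXS : Set.EqOn X S (dom S)) (hdX : dom X = dom S ∪ {p}) (hr : X p = some r) :
    X = Function.update S p (some r) := by
  funext v
  rcases eq_or_ne v p with rfl | hvp
  · simpa using hr
  rw [Function.update_of_ne hvp]
  by_cases hv : v ∈ dom S
  · exact hXS hv
  · have hvX : v ∉ dom X := by simp [hdX, hv, hvp]
    rw [notMem_dom_iff.mp hv, notMem_dom_iff.mp hvX]

lemma mem_Uset_iff {k : ℕ} {u : Fin k → U} (hu : Function.Injective u) (i : Fin k) (j : ℕ) :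
    u i ∈ Uset u j ↔ (i : ℕ) < j :=
  ⟨fun ⟨_, hi', hii'⟩ => hu hii' ▸ hi', fun hi => ⟨i, hi, rfl⟩⟩

lemma Uset_ne_Uset_pred {k : ℕ} {u : Fin k → U} (hu : Function.Injective u) {j : ℕ}
    (hj1 : 1 ≤ j) (hjk : j ≤ k) : Uset u j ≠ Uset u (j - 1) := by
  intro h
  have hmem := (mem_Uset_iff hu ⟨j - 1, by omega⟩ j).mpr (Nat.sub_one_lt_of_le hj1 le_rfl)
  rw [h, mem_Uset_iff hu] at hmem
  exact Nat.lt_irrefl _ hmem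

namespace erel

variable {Γ : Subgroup (Wr U R)} {k : ℕ} {u : Fin k → U} {j : ℕ} {X S : U → Option R}

lemma eqOn_dom (h : erel Γ u j X S) : Set.EqOn X S (dom S) := by
  obtain ⟨γ, -, -, hS, hres⟩ := h
  intro w hw
  have hγw : γ.perm w ∈ Uset u (j - 1) := hS ▸ Set.mem_image_of_mem _ hw
  have hγ := congrFun hres (γ.perm w)
  simp only [restrict, if_pos hγw, wsmul_apply_perm] at hγ
  exact Option.map_injective (γ.vals _).injective hγ

lemma notMem_dom (h : erel Γ u j X S) (hu : Function.Injective u) (hj1 : 1 ≤ j) (hjk : j ≤ k)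
    {p : U} (hdX : dom X = dom S ∪ {p}) : p ∉ dom S := by
  intro hp
  obtain ⟨γ, -, hX, hS, -⟩ := h
  rw [hdX, Set.union_singleton, Set.insert_eq_of_mem hp, hS] at hX
  exact Uset_ne_Uset_pred hu hj1 hjk hX.symm

end erel

theorem stmt_19_general {U R : Type*}
    (Γ : Subgroup (Wr U R)) {k : ℕ} (u : Fin k → U)
    (hu : Function.Injective u)
    (j : ℕ) (hj1 : 1 ≤ j) (hjk : j ≤ k)
    (S X Y : U → Option R)
    (hSnorm : dom S = Uset u (j - 1))
    (p q : U)
    (hX : OmegaJ Γ u j X ∧ erel Γ u j X S)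
    (hY : OmegaJ Γ u j Y ∧ erel Γ u j Y S)
    (hdX : dom X = Uset u (j - 1) ∪ {p})
    (hdY : dom Y = Uset u (j - 1) ∪ {q})
    (r s : R) (hr : X p = some r) (hs : Y q = some s) :
    (∃ g ∈ AutAsg Γ S, wsmul g X = Y) ↔
      (∃ g ∈ AutAsg Γ S, wpair g (p, r) = (q, s)) := by
  classical
  rw [← hSnorm] at hdX hdY
  have hSp : S p = none := notMem_dom_iff.mp (hX.2.notMem_dom hu hj1 hjk hdX)
  rw [eq_update_of_eqOn hX.2.eqOn_dom hdX hr, eq_update_of_eqOn hY.2.eqOn_dom hdY hs]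
  refine exists_congr fun g => and_congr_right fun hg => ?_
  have hSgp : S (g.perm p) = none := by rw [← hg.2, wsmul_apply_perm, hSp, Option.map_none]
  rw [wsmul_update, hg.2, update_some_eq_update_some_iff hSgp, wpair, Prod.mk.injEq]

/-- Under the value-permuting action, for a normalized seed `S` and extensions
`X, Y ∈ e(S)` with `underline X = U_{j-1} ∪ {p}`, `underline Y = U_{j-1} ∪ {q}`,
`X(p) = r`, `Y(q) = s`:  `X` and `Y` lie in the same `Aut(S)`-orbit of partial
assignments iff `(p, r)` and `(q, s)` lie in the same `Aut(S)`-orbit of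
`U × R` under the action `(u,r) ↦ (π u, σ(π u) r)`. -/
theorem stmt_19 {U R : Type*} [Finite U] [Finite R]
    (Γ : Subgroup (Wr U R)) {k : ℕ} (u : Fin k → U)
    (hu : Function.Injective u)
    (j : ℕ) (hj1 : 1 ≤ j) (hjk : j ≤ k)
    (S X Y : U → Option R)
    (hS : OmegaJ Γ u (j - 1) S)
    (hSnorm : dom S = Uset u (j - 1))
    (p q : U)
    (hX : OmegaJ Γ u j X ∧ erel Γ u j X S)
    (hY : OmegaJ Γ u j Y ∧ erel Γ u j Y S)
    (hdX : dom X = Uset u (j - 1) ∪ {p})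
    (hdY : dom Y = Uset u (j - 1) ∪ {q})
    (r s : R) (hr : X p = some r) (hs : Y q = some s) :
    (∃ g ∈ AutAsg Γ S, wsmul g X = Y) ↔
      (∃ g ∈ AutAsg Γ S, wpair g (p, r) = (q, s)) :=
  stmt_19_general Γ u hu j hj1 hjk S X Y hSnorm p q hX hY hdX hdY r s hr hs

end ValueSymmetry
end
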